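/- arXiv:2501.01870 — 9 statements merged into one kernel-verified Lean document; each statement's English description precedes it below -/
import Mathlib

section
/- Let a be a nonzero polynomial in ℂ[X]. A bivariate polynomial c(∂,λ) ∈ ℂ[∂,λ] satisfies c(∂,λ)a(μ) + c(∂+λ,μ)a(λ) − c(∂,μ)a(λ) − c(∂+μ,λ)a(μ) = 0 for all ∂, λ, μ ∈ ℂ if and only if there exist polynomials φ₁, φ₂ ∈ ℂ[X] such that c(∂,λ) = a(λ)(φ₁(∂+λ) − φ₁(∂)) + φ₂(λ). -/
/-!
Putting ∂ = 0 in the identity shows that a(∂)(c(∂,λ) - c(0,λ)) is symmetric in ∂ and λ, so a(λ)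
divides c(∂,λ) - c(0,λ) in ℂ[∂][λ]; write c(∂,λ) = c(0,λ) + a(λ) q(∂,λ). Substituting back, the
identity becomes a(λ) a(μ) times the additive cocycle condition
q(∂,λ) + q(∂+λ,μ) = q(∂,μ) + q(∂+μ,λ), which therefore holds everywhere, since a(λ) a(μ) ≠ 0 on a
dense set. Differentiating the cocycle condition in μ at μ = 0 shows that the ∂-derivative of
q(∂,λ) is s(∂+λ) - s(∂), where s(∂) is the λ-derivative of q at (∂,0); so with φ₁' = s we get
q(∂,λ) = φ₁(∂+λ) - φ₁(∂) + f(λ) for a polynomial f.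
-/

open Polynomial Bivariate

noncomputable def ev2 (c : MvPolynomial (Fin 2) ℂ) (x y : ℂ) : ℂ :=
  MvPolynomial.eval ![x, y] c

namespace Polynomial

theorem exists_derivative_eq {K : Type*} [Field K] [CharZero K] (p : K[X]) :
    ∃ q : K[X], derivative q = p := by
  induction p using Polynomial.induction_on' with
  | add p q hp hq =>
    obtain ⟨P, rfl⟩ := hp
    obtain ⟨Q, rfl⟩ := hq
    exact ⟨P + Q, derivative_add⟩
  | monomial n r =>
    refine ⟨monomial (n + 1) (r / (n + 1)), ?_⟩
    rw [derivative_monomial]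
    congr 1
    push_cast
    field_simp

section Topology

variable {R : Type*} [CommSemiring R]

theorem eval_equivMvPolynomial (p : R[X][Y]) (x y : R) :
    MvPolynomial.eval ![x, y] (equivMvPolynomial R p) = p.evalEval x y := by
  have hcomp : (MvPolynomial.eval ![x, y]).comp (equivMvPolynomial R).toRingHom =
      evalEvalRingHom x y := by
    ext <;> simp
  exact congr($hcomp p)

variable [TopologicalSpace R] [IsTopologicalSemiring R]

@[fun_prop]
theorem _root_.Continuous.evalEval {Z : Type*} [TopologicalSpace Z] {f g : Z → R}
    (hf : Continuous f) (hg : Continuous g) (p : R[X][Y]) :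
    Continuous fun z => p.evalEval (f z) (g z) := by
  simp_rw [← eval_equivMvPolynomial]
  exact (MvPolynomial.continuous_eval _).comp (continuous_pi fun i => by fin_cases i <;> simpa)

end Topology

theorem eq_zero_of_forall_eval_mul_eval_mul_eq_zero {𝕜 : Type*} [NontriviallyNormedField 𝕜]
    {a : 𝕜[X]} (ha : a ≠ 0) {F : 𝕜 → 𝕜 → 𝕜} (hF : Continuous (Function.uncurry F))
    (h : ∀ l m, a.eval l * a.eval m * F l m = 0) (l m : 𝕜) : F l m = 0 := by
  have hdense : Dense {z | a.eval z ≠ 0} := by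
    simpa [Set.sdiff_eq, Set.compl_ofPred] using
      dense_univ.sdiff_finite (finite_setOfPred_isRoot ha)
  refine eqOn_closure₂ (g := fun _ _ => 0) (fun l hl m hm => ?_) hF continuous_const
    l (hdense.closure_eq ▸ Set.mem_univ l) m (hdense.closure_eq ▸ Set.mem_univ m)
  exact (mul_eq_zero.1 (h l m)).resolve_left (mul_ne_zero hl hm)

theorem map_C_dvd_of_forall_dvd_map_evalRingHom {K : Type*} [Field K] {b : K[X]} (hb : b ≠ 0)
    {p : K[X][Y]} {S : Set K} (hS : S.Infinite) (h : ∀ x ∈ S, b ∣ p.map (evalRingHom x)) :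
    b.map C ∣ p := by
  set b₀ := b * C b.leadingCoeff⁻¹
  have hmonic : b₀.Monic := monic_mul_leadingCoeff_inv hb
  have hassoc : Associated b b₀ := associated_mul_unit_right b _
    (isUnit_C.2 (inv_ne_zero (leadingCoeff_ne_zero.2 hb)).isUnit)
  rw [← coe_mapRingHom, (hassoc.map (mapRingHom C)).dvd_iff_dvd_left, coe_mapRingHom,
    ← modByMonic_eq_zero_iff_dvd (hmonic.map C)]
  ext j : 1
  rw [coeff_zero]
  refine eq_zero_of_infinite_isRoot _ (hS.mono fun x hx => ?_)
  have hmod : (p %ₘ b₀.map C).map (evalRingHom x) = 0 := by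
    have hC : (evalRingHom x).comp C = RingHom.id K := RingHom.ext fun _ => eval_C
    rw [map_modByMonic _ (hmonic.map C), map_map, hC, map_id,
      modByMonic_eq_zero_iff_dvd hmonic, ← hassoc.dvd_iff_dvd_left]
    exact h x hx
  simpa using congr(coeff $hmod j)

theorem map_C_dvd_of_eval_mul_evalEval_symm {K : Type*} [Field K] [Infinite K] {a : K[X]}
    (ha : a ≠ 0) {D : K[X][Y]} (h : ∀ x y, a.eval x * D.evalEval x y = a.eval y * D.evalEval y x) :
    a.map C ∣ D := by
  refine map_C_dvd_of_forall_dvd_map_evalRingHom ha (finite_setOfPred_isRoot ha).infinite_compl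
    fun x hx => ?_
  have hfun : C (a.eval x) * D.map (evalRingHom x) = a * D.eval (C x) :=
    Polynomial.funext fun y => by simpa [map_evalRingHom_eval] using h x y
  exact (isUnit_C.2 (isUnit_iff_ne_zero.2 hx)).dvd_mul_left.1 (hfun ▸ dvd_mul_right a _)

theorem hasDerivAt_evalEval_right {𝕜 : Type*} [NontriviallyNormedField 𝕜] (p : 𝕜[X][Y])
    (x y : 𝕜) : HasDerivAt (fun y => p.evalEval x y) ((derivative p).evalEval x y) y := by
  simp_rw [← map_evalRingHom_eval, ← derivative_map]
  exact Polynomial.hasDerivAt _ _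

theorem exists_evalEval_eq_of_cocycle {𝕜 : Type*} [RCLike 𝕜] {q : 𝕜[X][Y]}
    (h : ∀ x l m, q.evalEval x l + q.evalEval (x + l) m = q.evalEval x m + q.evalEval (x + m) l) :
    ∃ R f : 𝕜[X], ∀ x y, q.evalEval x y = R.eval (x + y) - R.eval x + f.eval y := by
  set s : 𝕜[X] := (derivative q).eval 0
  have hs : ∀ x, s.eval x = (derivative q).evalEval x 0 := fun x => by rw [evalEval, C_0]
  have hderiv : ∀ x l, HasDerivAt (fun x => q.evalEval x l) (s.eval (x + l) - s.eval x) x := by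
    intro x l
    set F := fun x => q.evalEval x l
    have hF : HasDerivAt F (deriv F x) x := ((q.eval (C l)).differentiable x).hasDerivAt
    have hshift : HasDerivAt (fun m => F (x + m)) (deriv F x) 0 :=
      HasDerivAt.comp_const_add (f := F) x 0 (by rwa [add_zero])
    have hrhs : HasDerivAt (fun m => q.evalEval x l + q.evalEval (x + l) m - q.evalEval x m)
        (s.eval (x + l) - s.eval x) 0 := by
      rw [hs, hs]
      exact ((hasDerivAt_evalEval_right q _ 0).const_add _).sub (hasDerivAt_evalEval_right q _ 0)
    convert hF using 1
    refine hrhs.unique (hshift.congr_of_eventuallyEq (.of_forall fun m => ?_))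
    linear_combination h x l m
  obtain ⟨R, hR⟩ := exists_derivative_eq s
  have hR' : ∀ z, HasDerivAt (fun z => R.eval z) (s.eval z) z := fun z => hR ▸ R.hasDerivAt z
  refine ⟨R, q.map (evalRingHom 0) - R + C (R.eval 0), fun x y => ?_⟩
  have hG : ∀ x, HasDerivAt (fun x => q.evalEval x y - (R.eval (x + y) - R.eval x)) 0 x :=
    fun x => ((hderiv x y).fun_sub (((hR' _).comp_add_const x y).fun_sub (hR' x))).congr_deriv
      (by ring)
  have hconst := is_const_of_deriv_eq_zero (fun x => (hG x).differentiableAt)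
    (fun x => (hG x).deriv) x 0
  simp only [map_evalRingHom_eval, eval_add, eval_sub, eval_C, zero_add] at hconst ⊢
  linear_combination hconst

end Polynomial

theorem ev2_eq_evalEval (c : MvPolynomial (Fin 2) ℂ) (x y : ℂ) :
    ev2 c x y = ((equivMvPolynomial ℂ).symm c).evalEval x y := by
  rw [ev2, ← eval_equivMvPolynomial, AlgEquiv.apply_symm_apply]

/-- For a nonzero polynomial a, a bivariate polynomial c(∂,λ) satisfies
c(∂,λ)a(μ) + c(∂+λ,μ)a(λ) − c(∂,μ)a(λ) − c(∂+μ,λ)a(μ) = 0 iff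
c(∂,λ) = a(λ)(φ₁(∂+λ) − φ₁(∂)) + φ₂(λ) for some polynomials φ₁, φ₂. -/
theorem stmt_1 (a : Polynomial ℂ) (ha : a ≠ 0) (c : MvPolynomial (Fin 2) ℂ) :
    (∀ x l m : ℂ,
      ev2 c x l * a.eval m + ev2 c (x + l) m * a.eval l
        - ev2 c x m * a.eval l - ev2 c (x + m) l * a.eval m = 0) ↔
    (∃ φ₁ φ₂ : Polynomial ℂ, ∀ x y : ℂ,
      ev2 c x y = a.eval y * (φ₁.eval (x + y) - φ₁.eval x) + φ₂.eval y) := by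
  simp only [ev2_eq_evalEval]
  set b := (equivMvPolynomial ℂ).symm c
  constructor
  · intro H
    set c₀ : ℂ[X] := b.map (evalRingHom 0)
    obtain ⟨q, hq⟩ : a.map C ∣ b - c₀.map C := map_C_dvd_of_eval_mul_evalEval_symm ha fun x y => by
      have h := H 0 y x
      simp only [zero_add] at h
      simp only [evalEval_sub, evalEval_map_C, c₀, map_evalRingHom_eval]
      linear_combination -h
    have hbq : ∀ x y, b.evalEval x y = c₀.eval y + a.eval y * q.evalEval x y := fun x y => by
      have := congr(evalEval x y $hq)
      simp only [evalEval_sub, evalEval_mul, evalEval_map_C] at this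
      linear_combination this
    simp only [hbq] at H
    have hcocycle : ∀ x l m, q.evalEval x l + q.evalEval (x + l) m
        = q.evalEval x m + q.evalEval (x + m) l := fun x l m => by
      have := eq_zero_of_forall_eval_mul_eval_mul_eq_zero ha
        (F := fun l m => q.evalEval x l + q.evalEval (x + l) m
          - q.evalEval x m - q.evalEval (x + m) l) (by fun_prop)
        (fun l m => by linear_combination H x l m) l m
      linear_combination this
    obtain ⟨R, f, hRf⟩ := exists_evalEval_eq_of_cocycle hcocycle
    exact ⟨R, c₀ + a * f, fun x y => by rw [hbq, hRf, eval_add, eval_mul]; ring⟩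
  · rintro ⟨φ₁, φ₂, hφ⟩ x l m
    rw [hφ x l, hφ (x + l) m, hφ x m, hφ (x + m) l, add_right_comm x m l]
    ring
end

section
/- Let a, b be polynomials in ℂ[X] with a ≠ b. A bivariate polynomial c(∂,λ) ∈ ℂ[∂,λ] satisfies c(∂,λ)b(μ) + c(∂+λ,μ)a(λ) − c(∂,μ)b(λ) − c(∂+μ,λ)a(μ) = 0 for all ∂, λ, μ ∈ ℂ if and only if there exists a polynomial φ ∈ ℂ[X] such that c(∂,λ) = a(λ)φ(∂+λ) − b(λ)φ(∂). -/
open Polynomial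

namespace Polynomial

variable {K : Type*} [Field K]

noncomputable def twistedDiff (A B t : K) : K[X] →ₗ[K] K[X] :=
  A • taylor t - B • LinearMap.id

section twistedDiff

variable {A B t : K}

theorem twistedDiff_apply (φ : K[X]) : twistedDiff A B t φ = A • taylor t φ - B • φ :=
  rfl

theorem eval_twistedDiff (φ : K[X]) (x : K) :
    (twistedDiff A B t φ).eval x = A * φ.eval (x + t) - B * φ.eval x := by
  simp only [twistedDiff_apply, eval_sub, eval_smul, taylor_eval, smul_eq_mul]

theorem coeff_twistedDiff_natDegree (φ : K[X]) :
    (twistedDiff A B t φ).coeff φ.natDegree = (A - B) * φ.leadingCoeff := by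
  rw [twistedDiff_apply, coeff_sub, coeff_smul, coeff_smul, coeff_taylor_natDegree,
    coeff_natDegree, smul_eq_mul, smul_eq_mul, sub_mul]

theorem degree_twistedDiff_le (φ : K[X]) : (twistedDiff A B t φ).degree ≤ φ.degree := by
  rw [twistedDiff_apply]
  refine (degree_sub_le _ _).trans (max_le ?_ (degree_smul_le _ _))
  exact (degree_smul_le _ _).trans (degree_taylor φ t).le

theorem twistedDiff_injective (hAB : A ≠ B) : Function.Injective (twistedDiff A B t) := by
  refine (injective_iff_map_eq_zero _).mpr fun φ hφ => ?_
  have hcoeff := coeff_twistedDiff_natDegree (A := A) (B := B) (t := t) φ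
  rw [hφ, coeff_zero, eq_comm, mul_eq_zero] at hcoeff
  exact leadingCoeff_eq_zero.mp (hcoeff.resolve_left (sub_ne_zero.mpr hAB))

theorem twistedDiff_surjective (hAB : A ≠ B) : Function.Surjective (twistedDiff A B t) := by
  intro p
  have hmaps : ∀ φ ∈ degreeLT K (p.natDegree + 1),
      twistedDiff A B t φ ∈ degreeLT K (p.natDegree + 1) :=
    fun φ hφ => mem_degreeLT.mpr ((degree_twistedDiff_le φ).trans_lt (mem_degreeLT.mp hφ))
  have hinj : Function.Injective ((twistedDiff A B t).restrict hmaps) := fun φ ψ h =>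
    Subtype.ext (twistedDiff_injective hAB (congrArg Subtype.val h))
  have hp : p ∈ degreeLT K (p.natDegree + 1) :=
    mem_degreeLT.mpr ((degree_le_natDegree).trans_lt (by exact_mod_cast Nat.lt_succ_self _))
  obtain ⟨φ, hφ⟩ := LinearMap.surjective_of_injective hinj ⟨p, hp⟩
  exact ⟨φ, congrArg Subtype.val hφ⟩

end twistedDiff

end Polynomial

section Cocycle

variable {K : Type*} [Field K]

def IsCocycle (a b : K[X]) (f : K → K → K) : Prop :=
  ∀ x l m,
    f x l * b.eval m + f (x + l) m * a.eval l - f x m * b.eval l - f (x + m) l * a.eval m = 0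

def coboundary (a b φ : K[X]) (x y : K) : K :=
  a.eval y * φ.eval (x + y) - b.eval y * φ.eval x

theorem isCocycle_coboundary (a b φ : K[X]) : IsCocycle a b (coboundary a b φ) := by
  intro x l m
  simp only [coboundary, add_right_comm x m l]
  ring

theorem coboundary_eq_eval_twistedDiff (a b φ : K[X]) (x y : K) :
    coboundary a b φ x y = (twistedDiff (a.eval y) (b.eval y) y φ).eval x := by
  rw [eval_twistedDiff, coboundary]

variable {a b : K[X]}

theorem IsCocycle.sub {f g : K → K → K} (hf : IsCocycle a b f) (hg : IsCocycle a b g) :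
    IsCocycle a b (f - g) := by
  intro x l m
  simp only [Pi.sub_apply]
  linear_combination hf x l m - hg x l m

theorem IsCocycle.eq_zero_of_slice_eq_zero [Infinite K] {f : K → K → K} {P : K → K[X]} {t : K}
    (hf : IsCocycle a b f) (hP : ∀ x m, f x m = (P m).eval x) (ht : a.eval t ≠ b.eval t)
    (hPt : P t = 0) : P = 0 := by
  funext m
  apply twistedDiff_injective ht (t := t)
  refine Polynomial.funext fun x => ?_
  have hcocycle := hf x t m
  simp only [hP, hPt, eval_zero, zero_mul, sub_zero, zero_add] at hcocycle
  rw [eval_twistedDiff, Pi.zero_apply, map_zero, eval_zero]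
  linear_combination hcocycle

end Cocycle

noncomputable def sliceSnd (c : MvPolynomial (Fin 2) ℂ) (m : ℂ) : ℂ[X] :=
  MvPolynomial.aeval ![X, C m] c

theorem eval_sliceSnd (c : MvPolynomial (Fin 2) ℂ) (x m : ℂ) :
    (sliceSnd c m).eval x = ev2 c x m := by
  rw [sliceSnd, ev2, MvPolynomial.aeval_def, ← coe_evalRingHom, MvPolynomial.eval₂_comp_left]
  congr 1
  · ext; simp
  · ext i; fin_cases i <;> simp

/-- For polynomials a ≠ b, a bivariate polynomial c(∂,λ) satisfies
c(∂,λ)b(μ) + c(∂+λ,μ)a(λ) − c(∂,μ)b(λ) − c(∂+μ,λ)a(μ) = 0 iff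
c(∂,λ) = a(λ)φ(∂+λ) − b(λ)φ(∂) for some polynomial φ. -/
theorem stmt_2 (a b : Polynomial ℂ) (hab : a ≠ b) (c : MvPolynomial (Fin 2) ℂ) :
    (∀ x l m : ℂ,
      ev2 c x l * b.eval m + ev2 c (x + l) m * a.eval l
        - ev2 c x m * b.eval l - ev2 c (x + m) l * a.eval m = 0) ↔
    (∃ φ : Polynomial ℂ, ∀ x y : ℂ,
      ev2 c x y = a.eval y * φ.eval (x + y) - b.eval y * φ.eval x) := by
  constructor
  · intro hc
    obtain ⟨t, ht⟩ : ∃ t, a.eval t ≠ b.eval t := by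
      by_contra! h
      exact hab (Polynomial.funext h)
    obtain ⟨φ, hφ⟩ := twistedDiff_surjective (t := t) ht (sliceSnd c t)
    have hdefect := (IsCocycle.sub hc (isCocycle_coboundary a b φ)).eq_zero_of_slice_eq_zero
      (P := fun m => sliceSnd c m - twistedDiff (a.eval m) (b.eval m) m φ)
      (fun x m => by
        rw [eval_sub, eval_sliceSnd, Pi.sub_apply, Pi.sub_apply, coboundary_eq_eval_twistedDiff])
      ht (sub_eq_zero.mpr hφ.symm)
    refine ⟨φ, fun x y => ?_⟩
    have hy := congrArg (eval x) (congrFun hdefect y)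
    rwa [Pi.zero_apply, eval_zero, eval_sub, eval_sliceSnd, eval_twistedDiff, sub_eq_zero] at hy
  · rintro ⟨φ, hφ⟩
    have hc : ev2 c = coboundary a b φ := funext₂ hφ
    exact hc ▸ isCocycle_coboundary a b φ
end

section
/- Let a, ā, b, b̄ ∈ ℂ. If a bivariate polynomial c(∂,λ) ∈ ℂ[∂,λ] satisfies c(∂+λ,μ)(∂ + aλ + b) − c(∂,μ)(∂ + μ + āλ + b̄) = 0 for all ∂, λ, μ ∈ ℂ, then c = 0. -/
/-- If c(∂+λ,μ)(∂ + aλ + b) − c(∂,μ)(∂ + μ + āλ + b̄) = 0 for all ∂, λ, μ,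
then c = 0. -/
theorem stmt_3 (a abar b bbar : ℂ) (c : MvPolynomial (Fin 2) ℂ)
    (h : ∀ x l m : ℂ,
      ev2 c (x + l) m * (x + a * l + b) - ev2 c x m * (x + m + abar * l + bbar) = 0) :
    c = 0 := by
  -- Step 1: setting l = 0 gives ev2 c x m * (b - m - bbar) = 0, so ev2 vanishes off m = b - bbar.
  have key : ∀ x m : ℂ, m ≠ b - bbar → ev2 c x m = 0 := by
    intro x m hm
    have hx := h x 0 m
    rw [add_zero] at hx
    have h2 : ev2 c x m * (b - m - bbar) = 0 := by linear_combination hx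
    rcases mul_eq_zero.mp h2 with h3 | h3
    · exact h3
    · exact absurd (by linear_combination -h3 : m = b - bbar) hm
  -- Step 2: for fixed x, m ↦ ev2 c x m is a one-variable polynomial vanishing on an infinite set.
  have key2 : ∀ x m : ℂ, ev2 c x m = 0 := by
    intro x m
    set P : Polynomial ℂ :=
      MvPolynomial.eval₂ (Polynomial.C) ![Polynomial.C x, Polynomial.X] c with hP
    have hev : ∀ t : ℂ, Polynomial.eval t P = ev2 c x t := by
      intro t
      show (Polynomial.evalRingHom t) _ = _
      rw [hP, MvPolynomial.eval₂_comp_left]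
      unfold ev2
      rw [MvPolynomial.eval]
      congr 1
      · ext r
        simp
      · funext i
        fin_cases i <;> simp
    have hPzero : P = 0 := by
      apply Polynomial.eq_zero_of_infinite_isRoot
      apply Set.Infinite.mono (s := {t : ℂ | t ≠ b - bbar})
      · intro t ht
        simp only [Set.mem_setOf_eq, Polynomial.IsRoot]
        rw [hev t]
        exact key x t ht
      · exact Set.Finite.infinite_compl (Set.finite_singleton _)
    have := hev m
    rw [hPzero] at this
    simpa using this.symm
  -- Step 3: evaluation is zero everywhere, hence c = 0 over the infinite field ℂ.
  apply MvPolynomial.funext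
  intro v
  have hv : v = ![v 0, v 1] := by
    funext i
    fin_cases i <;> simp
  rw [map_zero, hv]
  exact key2 (v 0) (v 1)
end

section
/- Let p, φ ∈ ℂ[λ] with φ ≠ 0, and let g ∈ ℂ[λ] be a nonzero polynomial such that −g(μ)·φ(λ) = p(λ)·g(λ+μ) for all λ, μ ∈ ℂ. Then φ(λ) = −p(λ) and g is a nonzero constant polynomial. -/
open Polynomial

/-- If φ ≠ 0, g ≠ 0 and −g(μ)·φ(λ) = p(λ)·g(λ+μ) for all λ, μ, then
φ = −p and g is a nonzero constant polynomial. -/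
theorem stmt_9 (p phi g : Polynomial ℂ) (hphi : phi ≠ 0) (hg : g ≠ 0)
    (h : ∀ l m : ℂ, -(g.eval m * phi.eval l) = p.eval l * g.eval (l + m)) :
    phi = -p ∧ ∃ k : ℂ, k ≠ 0 ∧ g = Polynomial.C k := by
  -- Step 1: for each l, the polynomial identity -φ(l)•g = p(l)•g(X+l)
  have key : ∀ l : ℂ, Polynomial.C (-phi.eval l) * g
      = Polynomial.C (p.eval l) * (g.comp (Polynomial.X + Polynomial.C l)) := by
    intro l
    apply Polynomial.funext
    intro m
    simp only [eval_mul, eval_C, eval_comp, eval_add, eval_X]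
    rw [add_comm m l]
    rw [← h l m]; ring
  have hlcg : g.leadingCoeff ≠ 0 := leadingCoeff_ne_zero.2 hg
  -- Step 2: φ(l) = -p(l) for all l
  have hpt : ∀ l : ℂ, phi.eval l = (-p).eval l := by
    intro l
    have := congrArg Polynomial.leadingCoeff (key l)
    rw [leadingCoeff_mul, leadingCoeff_mul, leadingCoeff_C, leadingCoeff_C,
      leadingCoeff_comp (by simp [natDegree_X_add_C] : (Polynomial.X + Polynomial.C l).natDegree ≠ 0)] at this
    simp only [leadingCoeff_X_add_C, one_pow, mul_one] at this
    have h2 : -phi.eval l = p.eval l := mul_right_cancel₀ hlcg this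
    rw [eval_neg]; linear_combination -h2
  have hphip : phi = -p := Polynomial.funext hpt
  refine ⟨hphip, ?_⟩
  -- Step 3: pick l ≠ 0 with φ(l) ≠ 0
  obtain ⟨l, hl⟩ : ∃ l : ℂ, (phi * Polynomial.X).eval l ≠ 0 := by
    by_contra hc
    push_neg at hc
    have : phi * Polynomial.X = 0 := Polynomial.funext (by simpa using hc)
    exact mul_ne_zero hphi X_ne_zero this
  simp only [eval_mul, eval_X, mul_ne_zero_iff] at hl
  obtain ⟨hl1, hl2⟩ := hl
  -- g(m) = g(l+m) for all m
  have hshift : ∀ m : ℂ, g.eval m = g.eval (l + m) := by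
    intro m
    have h1 := h l m
    have h2 : p.eval l = -phi.eval l := by
      have h3 := hpt l; rw [eval_neg] at h3; linear_combination h3
    exact mul_left_cancel₀ hl1 (by linear_combination -h1 - g.eval (l+m) * h2)
  -- g(n*l) = g(0) for all n
  have hn : ∀ n : ℕ, g.eval (n * l) = g.eval 0 := by
    intro n
    induction n with
    | zero => simp
    | succ k ih =>
      have hc : ((k+1 : ℕ) : ℂ) * l = l + (k : ℂ) * l := by push_cast; ring
      rw [hc, ← hshift, ih]
  -- hence g - C (g.eval 0) has infinitely many roots
  have hconst : g = Polynomial.C (g.eval 0) := by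
    have hz : g - Polynomial.C (g.eval 0) = 0 := by
      apply Polynomial.eq_zero_of_infinite_isRoot
      apply Set.Infinite.mono (s := (fun n : ℕ => (n : ℂ) * l) '' Set.univ)
      · rintro x ⟨n, -, rfl⟩
        simp [Polynomial.IsRoot, hn n]
      · refine Set.Infinite.image ?_ Set.infinite_univ
        intro a _ b _ hab
        exact_mod_cast mul_right_cancel₀ hl2 hab
    have := sub_eq_zero.mp hz
    exact this
  refine ⟨g.eval 0, ?_, hconst⟩
  intro h0
  exact hg (by rw [hconst, h0, map_zero])
end

section
/- Let φ_A ∈ ℂ[λ] be nonzero, let φ_B, ψ_B ∈ ℂ[λ] with φ_B ≠ ψ_B, and let r, s ∈ ℂ[X] be polynomials satisfying φ_A(λ)φ_B(μ)·(r(∂+λ+μ) − r(∂+μ)) − φ_A(λ)ψ_B(μ)·(r(∂+λ) − r(∂)) = s(λ)·(φ_B(μ) − ψ_B(μ)) for all ∂, λ, μ ∈ ℂ. Then r has degree at most 1, and writing r(X) = r₁X + r₀, one has s(λ) = r₁·λ·φ_A(λ). -/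
open Polynomial

lemma exists_eval_ne_zero' (p : Polynomial ℂ) (hp : p ≠ 0) : ∃ x, p.eval x ≠ 0 := by
  by_contra hc
  push_neg at hc
  exact hp (Polynomial.funext (fun x => by simp [hc x]))

lemma const_of_affine (P : Polynomial ℂ) (a b c m : ℂ) (hab : a ≠ b)
    (h : ∀ x, a * P.eval (x + m) - b * P.eval x = c) : ∃ d, P = Polynomial.C d := by
  have hQ : C a * (P.comp (X + C m)) - C b * P = C c := by
    apply Polynomial.funext
    intro x
    simp [Polynomial.eval_comp]
    linear_combination h x
  rcases eq_or_ne P.natDegree 0 with h0 | h0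
  · exact ⟨P.coeff 0, Polynomial.eq_C_of_natDegree_eq_zero h0⟩
  · exfalso
    have hd : P ≠ 0 := fun h' => h0 (by simp [h'])
    have hlead : P.leadingCoeff ≠ 0 := Polynomial.leadingCoeff_ne_zero.mpr hd
    have h1 : (P.comp (X + C m)).natDegree = P.natDegree := by
      simp [Polynomial.natDegree_comp]
    have hcomp : (P.comp (X + C m)).coeff P.natDegree = P.coeff P.natDegree := by
      have h2 : (P.comp (X + C m)).leadingCoeff = P.leadingCoeff := by
        rw [Polynomial.leadingCoeff_comp (by simp)]
        simp
      calc (P.comp (X + C m)).coeff P.natDegree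
          = (P.comp (X + C m)).coeff (P.comp (X + C m)).natDegree := by rw [h1]
        _ = (P.comp (X + C m)).leadingCoeff := rfl
        _ = P.leadingCoeff := h2
        _ = P.coeff P.natDegree := rfl
    have := congrArg (fun q => Polynomial.coeff q P.natDegree) hQ
    simp [Polynomial.coeff_C, h0, hcomp] at this
    have : (a - b) * P.leadingCoeff = 0 := by linear_combination this
    rcases mul_eq_zero.mp this with h' | h'
    · exact hab (sub_eq_zero.mp h')
    · exact hlead h'

/-- if φ_A ≠ 0, φ_B ≠ ψ_B and
φ_A(λ)φ_B(μ)(r(∂+λ+μ) − r(∂+μ)) − φ_A(λ)ψ_B(μ)(r(∂+λ) − r(∂)) = s(λ)(φ_B(μ) − ψ_B(μ)),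
then deg r ≤ 1 and, writing r(X) = r₁X + r₀, s(λ) = r₁·λ·φ_A(λ). -/
theorem stmt_12 (phiA phiB psiB : Polynomial ℂ) (hA : phiA ≠ 0) (hB : phiB ≠ psiB)
    (r s : Polynomial ℂ)
    (h : ∀ x l m : ℂ,
      phiA.eval l * phiB.eval m * (r.eval (x + l + m) - r.eval (x + m))
        - phiA.eval l * psiB.eval m * (r.eval (x + l) - r.eval x)
      = s.eval l * (phiB.eval m - psiB.eval m)) :
    r.degree ≤ 1 ∧ ∀ l : ℂ, s.eval l = r.coeff 1 * l * phiA.eval l := by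
  -- pick l₀ ≠ 0 with φA(l₀) ≠ 0
  obtain ⟨l₀, hl₀⟩ := exists_eval_ne_zero' (X * phiA) (mul_ne_zero Polynomial.X_ne_zero hA)
  rw [Polynomial.eval_mul, Polynomial.eval_X] at hl₀
  have hl0 : l₀ ≠ 0 := fun h => hl₀ (by simp [h])
  have hAl : phiA.eval l₀ ≠ 0 := fun h => hl₀ (by simp [h])
  -- pick m₀ with φB(m₀) ≠ ψB(m₀)
  obtain ⟨m₀, hm₀⟩ := exists_eval_ne_zero' (phiB - psiB) (sub_ne_zero.mpr hB)
  rw [Polynomial.eval_sub] at hm₀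
  have hm : phiB.eval m₀ ≠ psiB.eval m₀ := sub_ne_zero.mp hm₀
  -- P = r(X + l₀) - r(X) is constant
  set P : Polynomial ℂ := r.comp (X + C l₀) - r with hPdef
  have hPeval : ∀ x : ℂ, P.eval x = r.eval (x + l₀) - r.eval x := by
    intro x; simp [hPdef, Polynomial.eval_comp]
  have hab : phiA.eval l₀ * phiB.eval m₀ ≠ phiA.eval l₀ * psiB.eval m₀ :=
    fun h => hm (mul_left_cancel₀ hAl h)
  obtain ⟨c', hPc⟩ := const_of_affine P (phiA.eval l₀ * phiB.eval m₀)
      (phiA.eval l₀ * psiB.eval m₀) (s.eval l₀ * (phiB.eval m₀ - psiB.eval m₀)) m₀ hab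
      (by
        intro x
        have hx := h x l₀ m₀
        rw [hPeval, hPeval]
        rw [show x + m₀ + l₀ = x + l₀ + m₀ by ring]
        linear_combination hx)
  have heval : ∀ x : ℂ, r.eval (x + l₀) = r.eval x + c' := by
    intro x
    have h1 := hPeval x
    rw [hPc, Polynomial.eval_C] at h1
    linear_combination -h1
  -- r agrees with a linear polynomial at all k·l₀
  have key : ∀ k : ℕ, r.eval ((k : ℂ) * l₀) = r.eval 0 + k * c' := by
    intro k
    induction k with
    | zero => simp
    | succ n ih =>
      have : ((n + 1 : ℕ) : ℂ) * l₀ = (n : ℂ) * l₀ + l₀ := by push_cast; ring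
      rw [this, heval, ih]
      push_cast; ring
  set q : Polynomial ℂ := C (c' / l₀) * X + C (r.eval 0) with hqdef
  have hrq : r = q := by
    have hroots : Set.Infinite {x | (r - q).IsRoot x} := by
      apply Set.Infinite.mono (s := Set.range (fun k : ℕ => (k : ℂ) * l₀))
      · rintro _ ⟨k, rfl⟩
        simp only [Set.mem_setOf_eq, Polynomial.IsRoot, Polynomial.eval_sub, hqdef,
          Polynomial.eval_add, Polynomial.eval_mul, Polynomial.eval_C, Polynomial.eval_X]
        rw [key k]
        field_simp
        ring
      · apply Set.infinite_range_of_injective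
        intro i j hij
        simp only at hij
        exact Nat.cast_injective (mul_right_cancel₀ hl0 hij)
    by_contra hne
    have : r - q = 0 := Polynomial.eq_zero_of_infinite_isRoot _ hroots
    exact hne (sub_eq_zero.mp this)
  have hdeg : r.degree ≤ 1 := by
    rw [hrq, hqdef]
    compute_degree
  refine ⟨hdeg, ?_⟩
  have hre : r = C (r.coeff 1) * X + C (r.coeff 0) := Polynomial.eq_X_add_C_of_degree_le_one hdeg
  have hrev : ∀ y : ℂ, r.eval y = r.coeff 1 * y + r.coeff 0 := by
    intro y
    conv_lhs => rw [hre]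
    simp
  intro l
  have hx := h 0 l m₀
  simp only [hrev] at hx
  have : (s.eval l - r.coeff 1 * l * phiA.eval l) * (phiB.eval m₀ - psiB.eval m₀) = 0 := by
    linear_combination -hx
  rcases mul_eq_zero.mp this with h' | h'
  · linear_combination h'
  · exact absurd (sub_eq_zero.mp h') hm
end

section
/- Let φ_A, ψ_A, φ_B, ψ_B ∈ ℂ[λ] with φ_A ≠ ψ_A and φ_B ≠ ψ_B, and let s, t ∈ ℂ[X]. Define f(∂,λ) = φ_A(λ)s(∂+λ) − ψ_A(λ)s(∂) and g(∂,λ) = φ_B(λ)t(∂+λ) − ψ_B(λ)t(∂). If f(∂,λ)ψ_B(μ) + g(∂+λ, μ)φ_A(λ) − g(∂,μ)ψ_A(λ) − f(∂+μ, λ)φ_B(μ) = 0 for all ∂, λ, μ ∈ ℂ, then s = t. -/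
open Polynomial

/-- The coefficient of `P.comp (X + C m)` at `P.natDegree` is the leading coefficient of `P`. -/
lemma comp_X_add_C_coeff_natDegree (P : Polynomial ℂ) (m : ℂ) :
    (P.comp (X + C m)).coeff P.natDegree = P.leadingCoeff := by
  by_cases hP : P = 0
  · simp [hP]
  · have hnd : (P.comp (X + C m)).natDegree = P.natDegree := by
      rw [natDegree_comp, natDegree_X_add_C, mul_one]
    have hlc : (P.comp (X + C m)).leadingCoeff = P.leadingCoeff := by
      rw [leadingCoeff_comp (by rw [natDegree_X_add_C]; exact one_ne_zero),
        leadingCoeff_X_add_C, one_pow, mul_one]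
    rw [← hnd]
    rw [← hlc]
    rfl

/-- with φ_A ≠ ψ_A, φ_B ≠ ψ_B, f(∂,λ) = φ_A(λ)s(∂+λ) − ψ_A(λ)s(∂) and
g(∂,λ) = φ_B(λ)t(∂+λ) − ψ_B(λ)t(∂), if
f(∂,λ)ψ_B(μ) + g(∂+λ,μ)φ_A(λ) − g(∂,μ)ψ_A(λ) − f(∂+μ,λ)φ_B(μ) = 0, then s = t. -/
theorem stmt_13 (phiA psiA phiB psiB : Polynomial ℂ)
    (hA : phiA ≠ psiA) (hB : phiB ≠ psiB) (s t : Polynomial ℂ)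
    (h : ∀ x l m : ℂ,
      (phiA.eval l * s.eval (x + l) - psiA.eval l * s.eval x) * psiB.eval m
        + (phiB.eval m * t.eval (x + l + m) - psiB.eval m * t.eval (x + l)) * phiA.eval l
        - (phiB.eval m * t.eval (x + m) - psiB.eval m * t.eval x) * psiA.eval l
        - (phiA.eval l * s.eval (x + m + l) - psiA.eval l * s.eval (x + m)) * phiB.eval m
      = 0) :
    s = t := by
  set u : Polynomial ℂ := s - t with hu
  suffices hu0 : u = 0 by
    have := sub_eq_zero.mp hu0
    exact this
  -- key identity for u
  have key : ∀ x l m : ℂ,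
      (phiA.eval l * u.eval (x + l) - psiA.eval l * u.eval x) * psiB.eval m
        = (phiA.eval l * u.eval (x + l + m) - psiA.eval l * u.eval (x + m)) * phiB.eval m := by
    intro x l m
    have hx := h x l m
    simp only [hu, Polynomial.eval_sub]
    have hc : x + m + l = x + l + m := by ring
    rw [hc] at hx
    linear_combination hx
  by_contra hu0
  by_cases hF : ∀ x l : ℂ, phiA.eval l * u.eval (x + l) - psiA.eval l * u.eval x = 0
  · -- then for every l, C (phiA l) * (u.comp (X + C l)) = C (psiA l) * u
    apply hA
    apply Polynomial.funext
    intro l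
    have hpoly : (C (phiA.eval l) * (u.comp (X + C l))) = C (psiA.eval l) * u := by
      apply Polynomial.funext
      intro x
      have := hF x l
      simp only [Polynomial.eval_mul, Polynomial.eval_C, Polynomial.eval_comp,
        Polynomial.eval_add, Polynomial.eval_X]
      linear_combination hF x l
    have hcoeff := congrArg (fun p => p.coeff u.natDegree) hpoly
    simp only [coeff_C_mul, comp_X_add_C_coeff_natDegree] at hcoeff
    have hlead : u.coeff u.natDegree = u.leadingCoeff := rfl
    rw [hlead] at hcoeff
    have hlc : u.leadingCoeff ≠ 0 := leadingCoeff_ne_zero.mpr hu0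
    exact mul_right_cancel₀ hlc hcoeff
  · push_neg at hF
    obtain ⟨x0, l0, hx0⟩ := hF
    set P : Polynomial ℂ := C (phiA.eval l0) * (u.comp (X + C l0)) - C (psiA.eval l0) * u
      with hP
    have hPeval : ∀ x : ℂ, P.eval x = phiA.eval l0 * u.eval (x + l0) - psiA.eval l0 * u.eval x := by
      intro x
      simp [hP]
    have hPne : P ≠ 0 := by
      intro h0
      apply hx0
      rw [← hPeval x0, h0, Polynomial.eval_zero]
    apply hB
    apply Polynomial.funext
    intro m
    have hpoly : C (psiB.eval m) * P = C (phiB.eval m) * (P.comp (X + C m)) := by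
      apply Polynomial.funext
      intro x
      have hk := key x l0 m
      simp only [Polynomial.eval_mul, Polynomial.eval_C, Polynomial.eval_comp,
        Polynomial.eval_add, Polynomial.eval_X, hPeval]
      have hc : x + m + l0 = x + l0 + m := by ring
      rw [hc]
      linear_combination hk
    have hcoeff := congrArg (fun p => p.coeff P.natDegree) hpoly
    simp only [coeff_C_mul, comp_X_add_C_coeff_natDegree] at hcoeff
    have hlead : P.coeff P.natDegree = P.leadingCoeff := rfl
    rw [hlead] at hcoeff
    have hlc : P.leadingCoeff ≠ 0 := leadingCoeff_ne_zero.mpr hPne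
    exact (mul_right_cancel₀ hlc hcoeff).symm
end

section
/- Let α ∈ ℂ and let g ∈ ℂ[λ] be a nonzero polynomial such that (αλ + μ)·g(μ) = μ·g(λ+μ) for all λ, μ ∈ ℂ. Then either α = 0 and g is a nonzero constant, or α = 1 and g(λ) = t·λ for some nonzero t ∈ ℂ. -/
open Polynomial

lemma zero_of_eval_ne (p : Polynomial ℂ) (h : ∀ x : ℂ, x ≠ 0 → p.eval x = 0) :
    p = 0 := by
  apply Polynomial.eq_zero_of_infinite_isRoot
  have hsub : ({0}ᶜ : Set ℂ) ⊆ {x | p.IsRoot x} := fun x hx => h x hx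
  exact Set.Infinite.mono hsub ((Set.finite_singleton (0:ℂ)).infinite_compl)

lemma const_of_eval_ne (p : Polynomial ℂ) (c : ℂ) (h : ∀ x : ℂ, x ≠ 0 → p.eval x = c) :
    p = C c := by
  have := zero_of_eval_ne (p - C c) (by intro x hx; simp [h x hx])
  exact sub_eq_zero.mp this

/-- if g ≠ 0 and (αλ + μ)·g(μ) = μ·g(λ+μ) for all λ, μ, then either
α = 0 and g is a nonzero constant, or α = 1 and g(λ) = t·λ for a nonzero t. -/
theorem stmt_15 (α : ℂ) (g : Polynomial ℂ) (hg : g ≠ 0)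
    (h : ∀ l m : ℂ, (α * l + m) * g.eval m = m * g.eval (l + m)) :
    (α = 0 ∧ ∃ t : ℂ, t ≠ 0 ∧ g = Polynomial.C t) ∨
    (α = 1 ∧ ∃ t : ℂ, t ≠ 0 ∧ g = Polynomial.C t * Polynomial.X) := by
  by_cases h0 : g.eval 0 = 0
  · -- g = X * q
    obtain ⟨q, hq⟩ := Polynomial.X_dvd_iff.mpr
      (by simpa [Polynomial.coeff_zero_eq_eval_zero] using h0)
    have key2 : ∀ l m : ℂ, m ≠ 0 →
        (α * l + m) * q.eval m = (l + m) * q.eval (l + m) := by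
      intro l m hm
      have := h l m
      rw [hq] at this
      simp only [Polynomial.eval_mul, Polynomial.eval_X] at this
      apply mul_left_cancel₀ hm
      linear_combination this
    set c := α * q.eval 0 with hc
    have hqx : ∀ x : ℂ, x ≠ 0 → q.eval x = c := by
      intro x hx
      have hp : (C α * C x + C (1 - α) * X) * q - C (x * q.eval x) = 0 := by
        apply zero_of_eval_ne
        intro m hm
        have h2 := key2 (x - m) m hm
        simp only [sub_add_cancel] at h2
        simp only [Polynomial.eval_sub, Polynomial.eval_mul, Polynomial.eval_add,
          Polynomial.eval_C, Polynomial.eval_X]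
        linear_combination h2
      have := congrArg (Polynomial.eval 0) hp
      simp only [Polynomial.eval_sub, Polynomial.eval_mul, Polynomial.eval_add,
        Polynomial.eval_C, Polynomial.eval_X, Polynomial.eval_zero, mul_zero, add_zero] at this
      -- this : α * x * q.eval 0 - x * q.eval x = 0
      have h3 := sub_eq_zero.mp this
      rw [hc]
      apply mul_left_cancel₀ hx
      linear_combination -h3
    have hqC : q = C c := const_of_eval_ne q c hqx
    have hgeq : g = C c * X := by rw [hq, hqC, mul_comm]
    have hcne : c ≠ 0 := by
      intro hc0
      apply hg
      rw [hgeq, hc0]; simp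
    have hα : α = 1 := by
      have := key2 1 1 one_ne_zero
      rw [hqx 1 one_ne_zero, show (1:ℂ)+1 = 2 by norm_num, hqx 2 (by norm_num)] at this
      have : α * c = c := by linear_combination this
      field_simp at this
      tauto
    exact Or.inr ⟨hα, c, hcne, hgeq⟩
  · have hα : α = 0 := by
      have := h 1 0
      simp at this
      tauto
    have hgx : ∀ x : ℂ, x ≠ 0 → g.eval x = g.eval 1 := by
      intro x hx
      have := h (x - 1) 1
      rw [hα] at this
      simp at this
      rw [← this]
    have hgC : g = C (g.eval 1) := const_of_eval_ne g _ hgx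
    have : g.eval 1 ≠ 0 := by
      intro h1
      apply hg; rw [hgC, h1]; simp
    exact Or.inl ⟨hα, g.eval 1, this, hgC⟩
end

section
/- Let a, α ∈ ℂ with a ≠ 1, and let g ∈ ℂ[λ] be a nonzero polynomial such that −(μ + αλ)·g(μ) = ((a−1)λ − μ)·g(λ+μ) for all λ, μ ∈ ℂ. Then α = 1 − a and g is a nonzero constant. -/
/-- if a ≠ 1, g ≠ 0 and −(μ + αλ)·g(μ) = ((a−1)λ − μ)·g(λ+μ) for all λ, μ,
then α = 1 − a and g is a nonzero constant. -/
theorem stmt_16 (a α : ℂ) (ha : a ≠ 1) (g : Polynomial ℂ) (hg : g ≠ 0)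
    (h : ∀ l m : ℂ, -((m + α * l) * g.eval m) = ((a - 1) * l - m) * g.eval (l + m)) :
    α = 1 - a ∧ ∃ t : ℂ, t ≠ 0 ∧ g = Polynomial.C t := by
  have ha' : a - 1 ≠ 0 := sub_ne_zero.mpr ha
  have hinf : ({x : ℂ | x ≠ 0} : Set ℂ).Infinite := by
    have : ({x : ℂ | x ≠ 0} : Set ℂ) = ({0} : Set ℂ)ᶜ := by ext x; simp
    rw [this]
    exact (Set.finite_singleton 0).infinite_compl
  -- key: -(α l g(0)) = (a-1) l g(l)
  have key : ∀ l : ℂ, -(α * l * g.eval 0) = (a - 1) * l * g.eval l := by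
    intro l
    have h0 := h l 0
    simp only [zero_add, add_zero] at h0
    linear_combination h0
  have ht : g.eval 0 ≠ 0 := by
    intro h0
    apply hg
    apply Polynomial.eq_zero_of_infinite_isRoot g (hinf.mono ?_)
    intro x hx
    have hk := key x
    rw [h0, mul_zero, neg_zero] at hk
    have hx' : (a - 1) * x ≠ 0 := mul_ne_zero ha' hx
    have : (a - 1) * x * g.eval x = 0 := hk.symm
    exact (mul_eq_zero.mp this).resolve_left hx'
  set c : ℂ := -(α * g.eval 0) / (a - 1) with hc
  have hgc : g = Polynomial.C c := by
    have hz : (g - Polynomial.C c) = 0 := by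
      apply Polynomial.eq_zero_of_infinite_isRoot _ (hinf.mono ?_)
      intro x hx
      simp only [Polynomial.IsRoot, Polynomial.eval_sub, Polynomial.eval_C, sub_eq_zero]
      have hk := key x
      simp only [Set.mem_setOf_eq]
      rw [eq_div_iff ha']
      apply mul_left_cancel₀ hx
      linear_combination -hk
    exact sub_eq_zero.mp hz
  have hcne : c ≠ 0 := by
    intro h0
    apply hg
    rw [hgc, h0, map_zero]
  have hα : α = 1 - a := by
    have hk := h 1 0
    rw [hgc] at hk
    simp only [Polynomial.eval_C] at hk
    have h2 : (α - (1 - a)) * c = 0 := by linear_combination -hk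
    have := (mul_eq_zero.mp h2).resolve_right hcne
    linear_combination this
  exact ⟨hα, c, hcne, hgc⟩
end

section
/- Let c, d ∈ ℂ be not both zero and let t ∈ ℂ be nonzero. Then there is no polynomial f ∈ ℂ[λ] such that (λ + μ)·(f(λ) − f(μ)) = (λ − μ)·f(λ+μ) + t·(−c·λ·μ·(λ − μ) − d·(λ+μ)·(λ − μ)) for all λ, μ ∈ ℂ. -/
/-- for (c,d) ≠ (0,0) and t ≠ 0, there is no polynomial f with
(λ+μ)(f(λ) − f(μ)) = (λ−μ)f(λ+μ) + t·(−cλμ(λ−μ) − d(λ+μ)(λ−μ)) for all λ, μ. -/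
theorem stmt_17 (c d : ℂ) (hcd : ¬(c = 0 ∧ d = 0)) (t : ℂ) (ht : t ≠ 0) :
    ¬ ∃ f : Polynomial ℂ, ∀ l m : ℂ,
      (l + m) * (f.eval l - f.eval m)
        = (l - m) * f.eval (l + m)
          + t * (-(c * l * m * (l - m)) - d * (l + m) * (l - m)) := by
  rintro ⟨f, h⟩
  have e1 := h 1 (-1)
  have e2 := h 2 (-2)
  have e3 := h 1 0
  norm_num at e1 e2 e3
  have hc : c = 0 := by
    have htc : t * c = 0 := by linear_combination (2 * e1 - e2) / 12
    rcases mul_eq_zero.mp htc with h | h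
    · exact absurd h ht
    · exact h
  have hd : d ≠ 0 := fun h0 => hcd ⟨hc, h0⟩
  have htd : t * d = 0 := by linear_combination e3 - e1/2 - t * hc
  rcases mul_eq_zero.mp htd with h | h
  · exact absurd h ht
  · exact hd h
end
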